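/- arXiv:2001.08877 — 2 statements merged into one kernel-verified Lean document; each statement's English description precedes it below -/
import Mathlib

section
/- Let S be a finite set of integers and A, D be integer-valued random variables with D taking values such that H(A|D) ≥ 1/2. Then there exists a universal constant c > 0 (independent of the distributions) such that E[(A-D)²] ≥ c. -/
/-!
With `Z = A - D`, the map `(a, d) ↦ (a - d, d)` is injective, so `H(A|D) = H(Z|D)`. Gibbs'
inequality against the subprobability `q(z, d) = w(z) · P(D = d)` gives
`H(Z|D) ≤ E[-log₂ w(Z)]` for every weight `w` of total mass at most `1`. A weight with mass
`7/8` at `0` and geometric tails has `-log₂ w(z) ≤ log₂(8/7) + 7 z²`, and `log₂(8/7) < 1/4`,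
so `1/2 ≤ 1/4 + 7 E[(A - D)²]`.
-/

open Finset

/-- Shannon entropy (base 2) of a random variable `X` on a finite probability
space with mass function `p`. -/
noncomputable def shannonEntropy {Ω α : Type} [Fintype Ω] [DecidableEq α]
    (p : Ω → ℝ) (X : Ω → α) : ℝ :=
  -∑ ω, p ω * Real.logb 2 (∑ ω', if X ω' = X ω then p ω' else 0)

/-- Conditional Shannon entropy H(A | D) = H(A, D) - H(D). -/
noncomputable def condEntropy {Ω α β : Type} [Fintype Ω] [DecidableEq α] [DecidableEq β]
    (p : Ω → ℝ) (A : Ω → α) (D : Ω → β) : ℝ :=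
  shannonEntropy p (fun ω => (A ω, D ω)) - shannonEntropy p D

open Real

section Entropy

variable {Ω α : Type} [Fintype Ω] [DecidableEq α] {p : Ω → ℝ}

variable (p) in
noncomputable def lawMass (X : Ω → α) (x : α) : ℝ := ∑ ω, if X ω = x then p ω else 0

variable (p) in
lemma shannonEntropy_eq_neg_sum_lawMass (X : Ω → α) :
    shannonEntropy p X = -∑ ω, p ω * logb 2 (lawMass p X (X ω)) := rfl

lemma lawMass_nonneg (hp : ∀ ω, 0 ≤ p ω) (X : Ω → α) (x : α) : 0 ≤ lawMass p X x :=
  sum_nonneg fun ω _ => by split_ifs <;> simp [hp ω]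

lemma le_lawMass (hp : ∀ ω, 0 ≤ p ω) (X : Ω → α) (ω : Ω) : p ω ≤ lawMass p X (X ω) := by
  simpa [lawMass] using single_le_sum (f := fun ω' => if X ω' = X ω then p ω' else 0)
    (fun ω' _ => by split_ifs <;> simp [hp ω']) (mem_univ ω)

lemma sum_lawMass_le (hp : ∀ ω, 0 ≤ p ω) (X : Ω → α) (s : Finset α) :
    ∑ x ∈ s, lawMass p X x ≤ ∑ ω, p ω := by
  unfold lawMass
  rw [sum_comm]
  refine sum_le_sum fun ω _ => ?_
  rw [sum_ite_eq]
  split_ifs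
  exacts [le_rfl, hp ω]

variable (p) in
lemma sum_mul_comp_eq_sum_lawMass (X : Ω → α) (f : α → ℝ) :
    ∑ ω, p ω * f (X ω) = ∑ x ∈ univ.image X, lawMass p X x * f x := by
  rw [← sum_fiberwise_of_maps_to (g := X) fun ω _ => mem_image_of_mem X (mem_univ ω)]
  refine sum_congr rfl fun x _ => ?_
  rw [lawMass, sum_mul, sum_filter]
  exact sum_congr rfl fun ω _ => by split_ifs with h <;> simp [h]

variable (p) in
lemma shannonEntropy_comp_of_injective {β : Type} [DecidableEq β] {f : α → β}
    (hf : Function.Injective f) (X : Ω → α) :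
    shannonEntropy p (fun ω => f (X ω)) = shannonEntropy p X := by
  simp only [shannonEntropy, hf.eq_iff]

theorem shannonEntropy_le_crossEntropy (hp : ∀ ω, 0 ≤ p ω) (hp1 : ∑ ω, p ω = 1)
    (X : Ω → α) {q : α → ℝ} (hq : ∀ x, 0 ≤ q x) (hqX : ∀ ω, 0 < p ω → 0 < q (X ω))
    (hq1 : ∑ x ∈ univ.image X, q x ≤ 1) :
    shannonEntropy p X ≤ ∑ ω, p ω * -logb 2 (q (X ω)) := by
  have hlog2 : 0 < log 2 := log_pos one_lt_two
  have pointwise : ∀ ω, p ω * -logb 2 (lawMass p X (X ω)) - p ω * -logb 2 (q (X ω))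
      ≤ (p ω * (q (X ω) / lawMass p X (X ω)) - p ω) / log 2 := by
    intro ω
    rcases (hp ω).eq_or_lt with h0 | hpos
    · simp [← h0]
    have hP := hpos.trans_le (le_lawMass hp X ω)
    have hratio := hqX ω hpos
    calc p ω * -logb 2 (lawMass p X (X ω)) - p ω * -logb 2 (q (X ω))
        = p ω * (log (q (X ω) / lawMass p X (X ω)) / log 2) := by
          rw [log_div hratio.ne' hP.ne', logb, logb]; ring
      _ ≤ p ω * ((q (X ω) / lawMass p X (X ω) - 1) / log 2) := by
          gcongr; exact log_le_sub_one_of_pos (by positivity)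
      _ = _ := by ring
  have hratio_sum : ∑ ω, p ω * (q (X ω) / lawMass p X (X ω)) ≤ 1 := by
    rw [sum_mul_comp_eq_sum_lawMass p X fun x => q x / lawMass p X x]
    refine le_trans (sum_le_sum fun x _ => ?_) hq1
    rcases (lawMass_nonneg hp X x).eq_or_lt with h0 | hpos
    · simp [← h0, hq x]
    · rw [mul_div_cancel₀ _ hpos.ne']
  have hsum := sum_le_sum fun ω (_ : ω ∈ univ) => pointwise ω
  rw [sum_sub_distrib, ← sum_div, sum_sub_distrib, hp1] at hsum
  have hgap : (∑ ω, p ω * (q (X ω) / lawMass p X (X ω)) - 1) / log 2 ≤ 0 :=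
    div_nonpos_of_nonpos_of_nonneg (by linarith) hlog2.le
  rw [shannonEntropy_eq_neg_sum_lawMass]
  simp only [mul_neg, sum_neg_distrib] at hsum ⊢
  linarith

theorem condEntropy_le_crossEntropy {β : Type} [DecidableEq β] (hp : ∀ ω, 0 ≤ p ω)
    (hp1 : ∑ ω, p ω = 1) (Z : Ω → α) (D : Ω → β) {w : α → ℝ} (hw : ∀ z, 0 < w z)
    (hw1 : ∀ T : Finset α, ∑ z ∈ T, w z ≤ 1) :
    condEntropy p Z D ≤ ∑ ω, p ω * -logb 2 (w (Z ω)) := by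
  set q : α × β → ℝ := fun x => w x.1 * lawMass p D x.2
  have hq_sum : ∑ x ∈ univ.image (fun ω => (Z ω, D ω)), q x ≤ 1 := by
    set S := univ.image fun ω => (Z ω, D ω)
    calc ∑ x ∈ S, q x ≤ ∑ x ∈ S.image Prod.fst ×ˢ S.image Prod.snd, q x :=
          sum_le_sum_of_subset_of_nonneg subset_product fun x _ _ =>
            mul_nonneg (hw x.1).le (lawMass_nonneg hp D x.2)
      _ = (∑ z ∈ S.image Prod.fst, w z) * ∑ d ∈ S.image Prod.snd, lawMass p D d := by
          rw [sum_mul_sum, sum_product]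
      _ ≤ 1 * 1 := by
          gcongr
          · exact sum_nonneg fun d _ => lawMass_nonneg hp D d
          · exact hw1 _
          · exact hp1 ▸ sum_lawMass_le hp D _
      _ = 1 := one_mul 1
  have hcross := shannonEntropy_le_crossEntropy hp hp1 (fun ω => (Z ω, D ω))
    (fun x => mul_nonneg (hw x.1).le (lawMass_nonneg hp D x.2))
    (fun ω hpos => mul_pos (hw _) (hpos.trans_le (le_lawMass hp D ω))) hq_sum
  have hsplit : ∑ ω, p ω * -logb 2 (w (Z ω) * lawMass p D (D ω))
      = ∑ ω, p ω * -logb 2 (w (Z ω)) + ∑ ω, p ω * -logb 2 (lawMass p D (D ω)) := by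
    rw [← sum_add_distrib]
    refine sum_congr rfl fun ω _ => ?_
    rcases (hp ω).eq_or_lt with h0 | hpos
    · simp [← h0]
    rw [logb_mul (hw _).ne' (hpos.trans_le (le_lawMass hp D ω)).ne']
    ring
  have hbound := hcross.trans_eq hsplit
  rw [condEntropy, shannonEntropy_eq_neg_sum_lawMass p D]
  simp only [mul_neg, sum_neg_distrib] at hbound ⊢
  linarith

end Entropy

section AddGroup

variable {Ω G : Type} [Fintype Ω] [AddGroup G] [DecidableEq G]

lemma condEntropy_sub_right (p : Ω → ℝ) (A D : Ω → G) :
    condEntropy p (fun ω => A ω - D ω) D = condEntropy p A D := by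
  have hinj : Function.Injective fun x : G × G => (x.1 - x.2, x.2) := by
    rintro ⟨a, d⟩ ⟨a', d'⟩ h
    simp only [Prod.mk.injEq] at h ⊢
    obtain ⟨h1, rfl⟩ := h
    exact ⟨sub_left_inj.1 h1, rfl⟩
  exact congrArg (· - _) (shannonEntropy_comp_of_injective p hinj fun ω => (A ω, D ω))

end AddGroup

noncomputable def peakedWeight (z : ℤ) : ℝ := (1 / 2) ^ (z.natAbs + 6) + if z = 0 then 7 / 8 else 0

lemma hasSum_half_pow_natAbs : HasSum (fun z : ℤ => (1 / 2 : ℝ) ^ z.natAbs) 3 := by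
  have hnat : HasSum (fun n : ℕ => (1 / 2 : ℝ) ^ (n : ℤ).natAbs) 2 := by
    simpa only [Int.natAbs_natCast] using hasSum_geometric_two
  have hneg : HasSum (fun n : ℕ => (1 / 2 : ℝ) ^ (-((n : ℤ) + 1)).natAbs) 1 := by
    have habs : ∀ n : ℕ, (-((n : ℤ) + 1)).natAbs = n + 1 := fun n => by omega
    have h := hasSum_geometric_two.mul_left (1 / 2)
    rw [show (1 / 2 : ℝ) * 2 = 1 by norm_num] at h
    simpa only [habs, pow_succ'] using h
  rw [show (3 : ℝ) = 2 + 1 by norm_num]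
  exact hnat.of_nat_of_neg_add_one hneg

lemma peakedWeight_pos (z : ℤ) : 0 < peakedWeight z := by
  unfold peakedWeight; split_ifs <;> positivity

lemma sum_peakedWeight_le (T : Finset ℤ) : ∑ z ∈ T, peakedWeight z ≤ 1 := by
  have hgeom : ∑ z ∈ T, (1 / 2 : ℝ) ^ z.natAbs ≤ 3 :=
    sum_le_hasSum T (fun _ _ => by positivity) hasSum_half_pow_natAbs
  have hpeak : ∑ z ∈ T, (if z = 0 then (7 / 8 : ℝ) else 0) ≤ 7 / 8 := by
    rw [sum_ite_eq']; split_ifs <;> norm_num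
  have hsplit : ∑ z ∈ T, peakedWeight z = (∑ z ∈ T, (1 / 2 : ℝ) ^ z.natAbs) * (1 / 2) ^ 6
      + ∑ z ∈ T, (if z = 0 then (7 / 8 : ℝ) else 0) := by
    simp only [peakedWeight, sum_add_distrib, pow_add, sum_mul]
  rw [hsplit, show (1 / 2 : ℝ) ^ 6 = 1 / 64 by norm_num]
  linarith

lemma neg_logb_peakedWeight_le (z : ℤ) :
    -logb 2 (peakedWeight z) ≤ logb 2 (8 / 7) + 7 * (z : ℝ) ^ 2 := by
  have h87 : 0 ≤ logb 2 (8 / 7) := logb_nonneg one_lt_two (by norm_num)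
  by_cases hz : z = 0
  · subst hz
    have hmass : (7 / 8 : ℝ) ≤ peakedWeight 0 := by norm_num [peakedWeight]
    have hlog := logb_le_logb_of_le one_lt_two (by norm_num) hmass
    rw [show (8 / 7 : ℝ) = (7 / 8)⁻¹ by norm_num, logb_inv, Int.cast_zero]
    linarith
  · have hle : (1 / 2 : ℝ) ^ (z.natAbs + 6) ≤ peakedWeight z := by simp [peakedWeight, hz]
    have hlog := logb_le_logb_of_le one_lt_two (by positivity) hle
    rw [logb_pow, one_div, logb_inv, logb_self_eq_one one_lt_two] at hlog
    have h1 : (1 : ℝ) ≤ |(z : ℝ)| := by rw [← Int.cast_abs]; exact_mod_cast Int.one_le_abs hz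
    have habs : ((z.natAbs : ℕ) : ℝ) = |(z : ℝ)| := by rw [Nat.cast_natAbs, Int.cast_abs]
    push_cast at hlog
    rw [habs] at hlog
    nlinarith [sq_abs (z : ℝ)]

lemma logb_two_eight_sevenths_lt : logb 2 (8 / 7) < 1 / 4 := by
  have hlog : log (8 / 7) ≤ 1 / 7 := by
    linarith [log_le_sub_one_of_pos (show (0 : ℝ) < 8 / 7 by norm_num)]
  have h2 := log_two_gt_d9
  rw [logb, div_lt_iff₀ (by linarith)]
  linarith

/-- If `A, D` are integer-valued random variables (finite ranges) with
conditional entropy `H(A|D) ≥ 1/2`, then `E[(A-D)²] ≥ c` for a universal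
constant `c > 0`. -/
theorem entropy_to_L2_lower_bound :
    ∃ c : ℝ, c > 0 ∧
      ∀ (Ω : Type) (_ : Fintype Ω) (p : Ω → ℝ) (A D : Ω → ℤ),
        (∀ ω, 0 ≤ p ω) → (∑ ω, p ω) = 1 →
        condEntropy p A D ≥ 1 / 2 →
        (∑ ω, p ω * ((A ω : ℝ) - (D ω : ℝ)) ^ 2) ≥ c := by
  refine ⟨1 / 28, by norm_num, fun Ω _ p A D hp hp1 hH => ?_⟩
  have hent : condEntropy p A D ≤ ∑ ω, p ω * -logb 2 (peakedWeight (A ω - D ω)) := by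
    rw [← condEntropy_sub_right]
    exact condEntropy_le_crossEntropy hp hp1 _ D peakedWeight_pos sum_peakedWeight_le
  have hcross : ∑ ω, p ω * -logb 2 (peakedWeight (A ω - D ω))
      ≤ logb 2 (8 / 7) + 7 * ∑ ω, p ω * ((A ω : ℝ) - (D ω : ℝ)) ^ 2 :=
    calc _ ≤ ∑ ω, p ω * (logb 2 (8 / 7) + 7 * ((A ω : ℝ) - (D ω : ℝ)) ^ 2) :=
          sum_le_sum fun ω _ => mul_le_mul_of_nonneg_left
            (by simpa using neg_logb_peakedWeight_le (A ω - D ω)) (hp ω)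
      _ = _ := by
          simp only [mul_add, sum_add_distrib, ← sum_mul, hp1, mul_left_comm _ (7 : ℝ), ← mul_sum]
          ring
  linarith [logb_two_eight_sevenths_lt]
end

section
/- Let θ be uniformly distributed on K_S = {i/S : i = 0,...,S−1} with S = 2^{B+1}, and let θ̂ be an estimator taking values in K_S such that I(θ̂; θ) ≤ B (in bits). Then H(θ | θ̂) ≥ 1, and consequently there is a universal constant c > 0 with E[(θ̂ − θ)²] ≥ c·2^{−2B}. -/
open Finset

/-- Mutual information I(X; Y) = H(X) + H(Y) - H(X, Y). -/
noncomputable def mutualInfo {Ω α β : Type} [Fintype Ω] [DecidableEq α] [DecidableEq β]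
    (p : Ω → ℝ) (X : Ω → α) (Y : Ω → β) : ℝ :=
  shannonEntropy p X + shannonEntropy p Y - shannonEntropy p (fun ω => (X ω, Y ω))

/-!
Since `θ` is uniform on `S = 2^(B+1)` points, `H(θ) = B + 1`, so `H(θ | θ̂) = H(θ) - I(θ̂; θ) ≥ 1`.
Writing `θ = I / S` and `θ̂ = J / S` with integer-valued `I, J` leaves all entropies unchanged,
and the conditional Gibbs inequality for the kernel `q(i | j) = (3/5) 4^(-|i - j|)` gives
`H(I | J) ≤ log₂ (5/3) + 2 E[(I - J)²]`. Since `log₂ (5/3) < 1`, this forces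
`E[(θ̂ - θ)²] ≥ (1 - log₂ (5/3)) / (2 S²)`.
-/

open Real Function

-- Pointwise Gibbs inequality: `log x ≤ x - 1` at `x = c n / m`.
lemma mul_logb_sub_logb_le {w m n c : ℝ} (hw : 0 ≤ w) (hwm : w ≤ m) (hmn : m ≤ n) (hc : 0 < c) :
    w * (logb 2 n - logb 2 m) ≤ w * -logb 2 c + (w * (c * n) / m - w) / log 2 := by
  rcases hw.eq_or_lt with rfl | hw
  · simp
  have hm : 0 < m := hw.trans_le hwm
  have hn : 0 < n := hm.trans_le hmn
  have hsplit : logb 2 n - logb 2 m = -logb 2 c + logb 2 (c * n / m) := by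
    rw [logb_div (by positivity) hm.ne', logb_mul hc.ne' hn.ne']
    ring
  have hlog : logb 2 (c * n / m) ≤ (c * n / m - 1) / log 2 :=
    div_le_div_of_nonneg_right (log_le_sub_one_of_pos (by positivity)) (log_nonneg one_le_two)
  calc w * (logb 2 n - logb 2 m) = w * -logb 2 c + w * logb 2 (c * n / m) := by
        rw [hsplit, mul_add]
    _ ≤ w * -logb 2 c + w * ((c * n / m - 1) / log 2) := by gcongr
    _ = w * -logb 2 c + (w * (c * n) / m - w) / log 2 := by ring

section Entropy

variable {Ω α β γ : Type} [Fintype Ω] [DecidableEq α] [DecidableEq β] [DecidableEq γ]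
  {p : Ω → ℝ}

variable (p) in
noncomputable def law (X : Ω → α) (x : α) : ℝ := ∑ ω, if X ω = x then p ω else 0

lemma law_eq_sum_filter (X : Ω → α) (x : α) : law p X x = ∑ ω with X ω = x, p ω :=
  (sum_filter _ _).symm

lemma law_nonneg (hp : ∀ ω, 0 ≤ p ω) (X : Ω → α) (x : α) : 0 ≤ law p X x :=
  sum_nonneg fun ω _ => by split_ifs <;> simp [hp ω]

lemma le_law_self (hp : ∀ ω, 0 ≤ p ω) (X : Ω → α) (ω : Ω) : p ω ≤ law p X (X ω) := by
  rw [law_eq_sum_filter]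
  exact single_le_sum (fun ω _ => hp ω) (by simp)

lemma law_pair_le (hp : ∀ ω, 0 ≤ p ω) (A : Ω → α) (D : Ω → β) (a : α) (d : β) :
    law p (fun ω => (A ω, D ω)) (a, d) ≤ law p D d := by
  simp only [law_eq_sum_filter, Prod.mk.injEq]
  exact sum_le_sum_of_subset_of_nonneg (fun ω => by simp +contextual) fun ω _ _ => hp ω

lemma sum_law_image (X : Ω → α) : ∑ x ∈ univ.image X, law p X x = ∑ ω, p ω := by
  simp only [law_eq_sum_filter]
  exact sum_fiberwise_of_maps_to (fun ω _ => mem_image_of_mem X (mem_univ ω)) p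

lemma sum_mul_div_law_le (hp : ∀ ω, 0 ≤ p ω) (X : Ω → α) {g : α → ℝ} (hg : ∀ x, 0 ≤ g x) :
    ∑ ω, p ω * g (X ω) / law p X (X ω) ≤ ∑ x ∈ univ.image X, g x := by
  rw [← sum_fiberwise_of_maps_to (fun ω _ => mem_image_of_mem X (mem_univ ω))]
  refine sum_le_sum fun x _ => ?_
  calc ∑ ω with X ω = x, p ω * g (X ω) / law p X (X ω)
      = g x / law p X x * ∑ ω with X ω = x, p ω := by
        rw [mul_sum]
        refine sum_congr rfl fun ω hω => ?_
        rw [(mem_filter.1 hω).2]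
        ring
    _ ≤ g x := by
        rw [← law_eq_sum_filter]
        rcases (law_nonneg hp X x).eq_or_lt with h | h
        · simp [← h, hg x]
        · rw [div_mul_cancel₀ _ h.ne']

lemma law_comp_of_injective {f : α → γ} (hf : Injective f) (X : Ω → α) (x : α) :
    law p (f ∘ X) (f x) = law p X x := by
  simp only [law, comp_apply, hf.eq_iff]

lemma shannonEntropy_eq_sum_law (X : Ω → α) :
    shannonEntropy p X = -∑ ω, p ω * logb 2 (law p X (X ω)) :=
  rfl

lemma shannonEntropy_comp_of_injective_s14 {f : α → γ} (hf : Injective f) (X : Ω → α) :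
    shannonEntropy p (f ∘ X) = shannonEntropy p X := by
  simp only [shannonEntropy_eq_sum_law, comp_apply, law_comp_of_injective hf]

lemma condEntropy_comp_of_injective {f : α → γ} {g : β → γ} (hf : Injective f) (hg : Injective g)
    (A : Ω → α) (D : Ω → β) :
    condEntropy p (f ∘ A) (g ∘ D) = condEntropy p A D := by
  unfold condEntropy
  rw [shannonEntropy_comp_of_injective_s14 hg,
    ← shannonEntropy_comp_of_injective_s14 (hf.prodMap hg)]
  rfl

lemma condEntropy_eq_sub_mutualInfo (A : Ω → α) (D : Ω → β) :
    condEntropy p A D = shannonEntropy p A - mutualInfo p D A := by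
  have hswap : shannonEntropy p (fun ω => (D ω, A ω)) = shannonEntropy p (fun ω => (A ω, D ω)) :=
    shannonEntropy_comp_of_injective_s14 Prod.swap_injective (fun ω => (A ω, D ω))
  rw [condEntropy, mutualInfo, hswap]
  ring

lemma shannonEntropy_of_law_eq (hp1 : ∑ ω, p ω = 1) {X : Ω → α} {m : ℝ}
    (h : ∀ ω, law p X (X ω) = m) : shannonEntropy p X = -logb 2 m := by
  simp only [shannonEntropy_eq_sum_law, h, ← sum_mul, hp1, one_mul]

lemma condEntropy_eq_sum_law (A : Ω → α) (D : Ω → β) :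
    condEntropy p A D = ∑ ω, p ω *
      (logb 2 (law p D (D ω)) - logb 2 (law p (fun ω => (A ω, D ω)) (A ω, D ω))) := by
  simp only [condEntropy, shannonEntropy_eq_sum_law, mul_sub, sum_sub_distrib]
  ring

theorem condEntropy_le_sum_mul_neg_logb (hp : ∀ ω, 0 ≤ p ω) (hp1 : ∑ ω, p ω = 1)
    (A : Ω → α) (D : Ω → β) {q : α → β → ℝ} (hq : ∀ a d, 0 < q a d)
    (hq_sum : ∀ d (s : Finset α), ∑ a ∈ s, q a d ≤ 1) :
    condEntropy p A D ≤ ∑ ω, p ω * -logb 2 (q (A ω) (D ω)) := by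
  set AD : Ω → α × β := fun ω => (A ω, D ω)
  have hratio :
      ∑ ω, p ω * (q (A ω) (D ω) * law p D (D ω)) / law p AD (AD ω) ≤ 1 :=
    calc ∑ ω, p ω * (q (A ω) (D ω) * law p D (D ω)) / law p AD (AD ω)
        ≤ ∑ v ∈ univ.image AD, q v.1 v.2 * law p D v.2 :=
          sum_mul_div_law_le (g := fun v => q v.1 v.2 * law p D v.2) hp AD
            fun v => mul_nonneg (hq _ _).le (law_nonneg hp D _)
      _ ≤ ∑ v ∈ univ.image A ×ˢ univ.image D, q v.1 v.2 * law p D v.2 :=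
          sum_le_sum_of_subset_of_nonneg (fun v => by aesop)
            fun v _ _ => mul_nonneg (hq _ _).le (law_nonneg hp D _)
      _ = ∑ d ∈ univ.image D, (∑ a ∈ univ.image A, q a d) * law p D d := by
          simp only [sum_product_right, sum_mul]
      _ ≤ ∑ d ∈ univ.image D, law p D d :=
          sum_le_sum fun d _ => mul_le_of_le_one_left (law_nonneg hp D d) (hq_sum d _)
      _ = 1 := (sum_law_image D).trans hp1
  rw [condEntropy_eq_sum_law]
  calc ∑ ω, p ω * (logb 2 (law p D (D ω)) - logb 2 (law p AD (AD ω)))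
      ≤ ∑ ω, (p ω * -logb 2 (q (A ω) (D ω)) +
          (p ω * (q (A ω) (D ω) * law p D (D ω)) / law p AD (AD ω) - p ω) / log 2) :=
        sum_le_sum fun ω _ => mul_logb_sub_logb_le (hp ω) (le_law_self hp AD ω)
          (law_pair_le hp A D _ _) (hq _ _)
    _ = ∑ ω, p ω * -logb 2 (q (A ω) (D ω)) +
          (∑ ω, p ω * (q (A ω) (D ω) * law p D (D ω)) / law p AD (AD ω) - 1) / log 2 := by
        rw [sum_add_distrib, ← sum_div, sum_sub_distrib, hp1]
    _ ≤ ∑ ω, p ω * -logb 2 (q (A ω) (D ω)) :=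
        add_le_of_nonpos_right <|
          div_nonpos_of_nonpos_of_nonneg (by linarith) (log_nonneg one_le_two)

end Entropy

-- Its mass `3/5 > 1/2` at `0` costs less than one bit, which is what makes the bound nontrivial.
noncomputable def discreteLaplace (k : ℤ) : ℝ := 3 / 5 * (1 / 4) ^ k.natAbs

lemma discreteLaplace_pos (k : ℤ) : 0 < discreteLaplace k := by
  unfold discreteLaplace; positivity

lemma hasSum_discreteLaplace : HasSum discreteLaplace 1 := by
  have hgeom := hasSum_geometric_of_lt_one (r := (1 / 4 : ℝ)) (by norm_num) (by norm_num)
  have hpos : HasSum (fun n : ℕ => discreteLaplace n) (3 / 5 * (1 - 1 / 4)⁻¹) := by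
    simpa [discreteLaplace] using hgeom.mul_left (3 / 5)
  have hneg : HasSum (fun n : ℕ => discreteLaplace (-(n + 1))) (3 / 20 * (1 - 1 / 4)⁻¹) := by
    have hterm : ∀ n : ℕ, discreteLaplace (-(n + 1)) = 3 / 20 * (1 / 4) ^ n := fun n => by
      rw [discreteLaplace, show (-((n : ℤ) + 1)).natAbs = n + 1 by omega, pow_succ]
      ring
    simpa only [hterm] using hgeom.mul_left (3 / 20)
  convert hpos.of_nat_of_neg_add_one hneg using 1
  norm_num

lemma neg_logb_discreteLaplace_le (k : ℤ) :
    -logb 2 (discreteLaplace k) ≤ logb 2 (5 / 3) + 2 * (k : ℝ) ^ 2 := by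
  have hk : (k.natAbs : ℝ) ≤ (k : ℝ) ^ 2 := by
    rw [Nat.cast_natAbs]
    exact_mod_cast Int.natAbs_le_self_sq k
  have hquarter : logb 2 (1 / 4) = -2 := by
    rw [show (1 / 4 : ℝ) = (2 ^ 2)⁻¹ by norm_num, logb_inv, logb_pow, logb_self_eq_one one_lt_two]
    norm_num
  rw [discreteLaplace, logb_mul (by norm_num) (by positivity), logb_pow, hquarter,
    show (3 / 5 : ℝ) = (5 / 3)⁻¹ by norm_num, logb_inv]
  linarith

lemma sum_discreteLaplace_sub_le_one (d : ℤ) (s : Finset ℤ) :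
    ∑ a ∈ s, discreteLaplace (a - d) ≤ 1 :=
  calc ∑ a ∈ s, discreteLaplace (a - d) = ∑ k ∈ s.image (· - d), discreteLaplace k :=
        (sum_image fun _ _ _ _ h => sub_left_injective h).symm
    _ ≤ 1 := sum_le_hasSum _ (fun _ _ => (discreteLaplace_pos _).le) hasSum_discreteLaplace

lemma logb_two_five_div_three_lt_one : logb 2 (5 / 3) < 1 := by
  rw [← logb_self_eq_one one_lt_two, logb_lt_logb_iff one_lt_two (by norm_num) two_pos]
  norm_num

section IntegerValued

variable {Ω : Type} [Fintype Ω] {p : Ω → ℝ}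

theorem condEntropy_le_logb_add_sum_sq (hp : ∀ ω, 0 ≤ p ω) (hp1 : ∑ ω, p ω = 1) (A D : Ω → ℤ) :
    condEntropy p A D ≤ logb 2 (5 / 3) + 2 * ∑ ω, p ω * ((A ω - D ω : ℤ) : ℝ) ^ 2 :=
  calc condEntropy p A D ≤ ∑ ω, p ω * -logb 2 (discreteLaplace (A ω - D ω)) :=
        condEntropy_le_sum_mul_neg_logb hp hp1 A D (q := fun a d => discreteLaplace (a - d))
          (fun _ _ => discreteLaplace_pos _) sum_discreteLaplace_sub_le_one
    _ ≤ ∑ ω, p ω * (logb 2 (5 / 3) + 2 * ((A ω - D ω : ℤ) : ℝ) ^ 2) :=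
        sum_le_sum fun ω _ => mul_le_mul_of_nonneg_left (neg_logb_discreteLaplace_le _) (hp ω)
    _ = logb 2 (5 / 3) + 2 * ∑ ω, p ω * ((A ω - D ω : ℤ) : ℝ) ^ 2 := by
        simp only [mul_add, sum_add_distrib, ← sum_mul, hp1, mul_sum]
        ring_nf

theorem sum_sq_div_ge_of_one_le_condEntropy (hp : ∀ ω, 0 ≤ p ω) (hp1 : ∑ ω, p ω = 1)
    {S : ℝ} (hS : 0 < S) (A D : Ω → ℤ)
    (h : 1 ≤ condEntropy p (fun ω => (A ω : ℝ) / S) (fun ω => (D ω : ℝ) / S)) :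
    (1 - logb 2 (5 / 3)) / 2 / S ^ 2 ≤ ∑ ω, p ω * ((D ω : ℝ) / S - (A ω : ℝ) / S) ^ 2 := by
  have hgrid : Injective fun k : ℤ => (k : ℝ) / S := fun a b hab => by simpa [hS.ne'] using hab
  have hrelabel : condEntropy p (fun ω => (A ω : ℝ) / S) (fun ω => (D ω : ℝ) / S) =
      condEntropy p A D :=
    condEntropy_comp_of_injective hgrid hgrid A D
  have hscale : ∑ ω, p ω * ((D ω : ℝ) / S - (A ω : ℝ) / S) ^ 2 =
      (∑ ω, p ω * ((A ω - D ω : ℤ) : ℝ) ^ 2) / S ^ 2 := by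
    rw [sum_div]
    refine sum_congr rfl fun ω _ => ?_
    push_cast
    field_simp
    ring
  rw [hscale]
  refine div_le_div_of_nonneg_right ?_ (sq_nonneg S)
  linarith [condEntropy_le_logb_add_sum_sq hp hp1 A D]

end IntegerValued

lemma two_zpow_neg_two_mul (B : ℕ) : (2 : ℝ) ^ (-(2 * B : ℤ)) = 4 / (2 ^ (B + 1)) ^ 2 := by
  rw [← pow_mul, show (B + 1) * 2 = 2 * B + 2 by ring, pow_add, zpow_neg,
    show (2 * B : ℤ) = ((2 * B : ℕ) : ℤ) by push_cast; ring, zpow_natCast]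
  field_simp
  norm_num

/-- If `θ` is uniform on the grid `K_S = {i/S : i < S}` with `S = 2^(B+1)`, the
estimator `θhat` takes values in `K_S`, and `I(θhat; θ) ≤ B` bits, then
`H(θ | θhat) ≥ 1` and `E[(θhat - θ)²] ≥ c · 2^(-2B)` for a universal `c > 0`. -/
theorem lower_bound_localization_phase :
    ∃ c : ℝ, c > 0 ∧
      ∀ (B : ℕ) (Ω : Type) (_ : Fintype Ω) (p : Ω → ℝ) (θ θhat : Ω → ℝ),
        (∀ ω, 0 ≤ p ω) → (∑ ω, p ω) = 1 →
        -- θ is uniformly distributed on K_S, S = 2^(B+1)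
        (∀ ω, ∃ i : ℕ, i < 2 ^ (B + 1) ∧ θ ω = (i : ℝ) / 2 ^ (B + 1)) →
        (∀ i : ℕ, i < 2 ^ (B + 1) →
          (∑ ω, if θ ω = (i : ℝ) / 2 ^ (B + 1) then p ω else 0) = 1 / 2 ^ (B + 1)) →
        -- θhat takes values in K_S
        (∀ ω, ∃ i : ℕ, i < 2 ^ (B + 1) ∧ θhat ω = (i : ℝ) / 2 ^ (B + 1)) →
        mutualInfo p θhat θ ≤ (B : ℝ) →
        condEntropy p θ θhat ≥ 1 ∧
        (∑ ω, p ω * (θhat ω - θ ω) ^ 2) ≥ c * 2 ^ (-(2 * B : ℤ)) := by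
  refine ⟨(1 - logb 2 (5 / 3)) / 8, by linarith [logb_two_five_div_three_lt_one], ?_⟩
  intro B Ω _ p θ θhat hp hp1 hθ_grid hθ_unif hθhat_grid hMI
  have hθ_law : ∀ ω, law p θ (θ ω) = 1 / 2 ^ (B + 1) := fun ω => by
    obtain ⟨i, hi, hθω⟩ := hθ_grid ω
    rw [hθω]
    exact hθ_unif i hi
  have hH : condEntropy p θ θhat ≥ 1 := by
    rw [condEntropy_eq_sub_mutualInfo, shannonEntropy_of_law_eq hp1 hθ_law]
    simp only [one_div, logb_inv, logb_pow, logb_self_eq_one one_lt_two]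
    push_cast
    linarith
  refine ⟨hH, ?_⟩
  choose I _ hI using hθ_grid
  choose J _ hJ using hθhat_grid
  obtain rfl : θ = fun ω => ((I ω : ℤ) : ℝ) / 2 ^ (B + 1) := funext fun ω => by simp [hI]
  obtain rfl : θhat = fun ω => ((J ω : ℤ) : ℝ) / 2 ^ (B + 1) := funext fun ω => by simp [hJ]
  calc (1 - logb 2 (5 / 3)) / 8 * 2 ^ (-(2 * B : ℤ))
      = (1 - logb 2 (5 / 3)) / 2 / (2 ^ (B + 1)) ^ 2 := by
        rw [two_zpow_neg_two_mul]
        ring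
    _ ≤ _ := sum_sq_div_ge_of_one_le_condEntropy hp hp1 (by positivity) _ _ hH
end
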